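/- arXiv:2510.14870 — 4 statements merged into one kernel-verified Lean document; each statement's English description precedes it below -/
import Mathlib

section
/- Let 𝓑 be a nonempty set and M_k, M_{k+1} : 𝓑 → ℝ with M_k(x) − M_{k+1}(x) > 0 for all x ∈ 𝓑. Suppose B_k ≥ 0 and B_{k+1} < 0 are real constants such that M_k(x) ≤ B_k and M_{k+1}(x) ≤ B_{k+1} for all x ∈ 𝓑. Then for every x ∈ 𝓑, (B_k/(B_k − B_{k+1}))·(M_k(x) − M_{k+1}(x)) − M_k(x) ≥ 0; equivalently, sup_{x∈𝓑} M_k(x)/(M_k(x) − M_{k+1}(x)) ≤ B_k/(B_k − B_{k+1}). -/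
/-! With `c = B_k / (B_k - B_{k+1}) ∈ [0, 1]` and `c (B_k - B_{k+1}) = B_k`, the quantity
`c (M_k - M_{k+1}) - M_k = -(1 - c) M_k - c M_{k+1}` is antitone in both `M_k` and `M_{k+1}`,
so it is at least its value `-(1 - c) B_k - c B_{k+1} = 0` at the upper bounds. -/

theorem le_div_sub_mul_sub_of_le {a b A B : ℝ} (hA : 0 ≤ A) (hB : B ≤ 0) (ha : a ≤ A)
    (hb : b ≤ B) : a ≤ A / (A - B) * (a - b) := by
  set c := A / (A - B)
  have hc₀ : 0 ≤ c := div_nonneg hA (by linarith)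
  have hc₁ : c ≤ 1 := div_le_one_of_le₀ (by linarith) (by linarith)
  -- when `A - B = 0` both sides vanish, since then `A = 0` and `c = 0`
  have hcA : c * (A - B) = A := by
    rcases (sub_nonneg.2 (hB.trans hA)).eq_or_lt with hAB | hAB
    · simp only [c, ← hAB, div_zero, zero_mul]; linarith
    · exact div_mul_cancel₀ A hAB.ne'
  nlinarith [mul_le_mul_of_nonneg_left ha (sub_nonneg.2 hc₁), mul_le_mul_of_nonneg_left hb hc₀]

theorem div_sub_le_div_sub_of_le {a b A B : ℝ} (hA : 0 ≤ A) (hB : B ≤ 0) (ha : a ≤ A)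
    (hb : b ≤ B) (hab : 0 < a - b) : a / (a - b) ≤ A / (A - B) :=
  (div_le_iff₀ hab).2 (le_div_sub_mul_sub_of_le hA hB ha hb)

theorem stmt_2_general {α : Type*} (𝓑 : Set α) (Mk Mk1 : α → ℝ)
    (hpos : ∀ x ∈ 𝓑, 0 < Mk x - Mk1 x)
    (Bk Bk1 : ℝ) (hBk : 0 ≤ Bk) (hBk1 : Bk1 < 0)
    (hMk : ∀ x ∈ 𝓑, Mk x ≤ Bk) (hMk1 : ∀ x ∈ 𝓑, Mk1 x ≤ Bk1) :
    (∀ x ∈ 𝓑, 0 ≤ Bk / (Bk - Bk1) * (Mk x - Mk1 x) - Mk x) ∧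
    sSup ((fun x => Mk x / (Mk x - Mk1 x)) '' 𝓑) ≤ Bk / (Bk - Bk1) := by
  refine ⟨fun x hx => sub_nonneg.2 (le_div_sub_mul_sub_of_le hBk hBk1.le (hMk x hx) (hMk1 x hx)),
    Real.sSup_le ?_ (div_nonneg hBk (by linarith))⟩
  rintro _ ⟨x, hx, rfl⟩
  exact div_sub_le_div_sub_of_le hBk hBk1.le (hMk x hx) (hMk1 x hx) (hpos x hx)

/-- core inequality of Proposition 2.3: from upper bounds `Bk ≥ 0` and
`Bk1 < 0` on `Mk` and `Mk1` one gets the pointwise inequality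
`(Bk/(Bk − Bk1))·(Mk(x) − Mk1(x)) − Mk(x) ≥ 0`, equivalently the bound
`sup_x Mk(x)/(Mk(x) − Mk1(x)) ≤ Bk/(Bk − Bk1)`. -/
theorem stmt_2 {α : Type*} (𝓑 : Set α) (hne : 𝓑.Nonempty) (Mk Mk1 : α → ℝ)
    (hpos : ∀ x ∈ 𝓑, 0 < Mk x - Mk1 x)
    (Bk Bk1 : ℝ) (hBk : 0 ≤ Bk) (hBk1 : Bk1 < 0)
    (hMk : ∀ x ∈ 𝓑, Mk x ≤ Bk) (hMk1 : ∀ x ∈ 𝓑, Mk1 x ≤ Bk1) :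
    (∀ x ∈ 𝓑, 0 ≤ Bk / (Bk - Bk1) * (Mk x - Mk1 x) - Mk x) ∧
    sSup ((fun x => Mk x / (Mk x - Mk1 x)) '' 𝓑) ≤ Bk / (Bk - Bk1) :=
  stmt_2_general 𝓑 Mk Mk1 hpos Bk Bk1 hBk hBk1 hMk hMk1
end

section
/- Let 𝓑 ⊆ ℝⁿ, let f : 𝓑 → ℝⁿ and A : 𝓑 → ℝ^{m×m} be continuous, and define Φ(x,z) = zᵀA(x)z and ℓ(x,z) = A(x)z − Φ(x,z)z. Let V : ℝⁿ × ℝ^m → ℝ be continuously differentiable. Let x : [0,∞) → 𝓑 be a differentiable solution of x′(t) = f(x(t)) whose range is bounded with closure contained in 𝓑, and let y : [0,∞) → ℝ^m be differentiable with y′(t) = A(x(t))y(t) and y(0) ≠ 0. Then limsup_{t→∞} (1/t) log|y(t)| ≤ sup { Φ(x,z) + f(x)·D_xV(x,z) + ℓ(x,z)·D_zV(x,z) : x ∈ 𝓑, z ∈ ℝ^m, |z| = 1 }. -/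
open Filter Set Bornology

/-- The action of an `m × m` real matrix on `EuclideanSpace ℝ (Fin m)`. -/
noncomputable def mulVecE {m : ℕ} (A : Matrix (Fin m) (Fin m) ℝ) (v : EuclideanSpace ℝ (Fin m)) :
    EuclideanSpace ℝ (Fin m) :=
  Matrix.toEuclideanCLM (𝕜 := ℝ) A v

/-- `Φ(x,z) = zᵀ A(x) z`, the instantaneous growth rate. -/
noncomputable def Phi {n m : ℕ} (A : EuclideanSpace ℝ (Fin n) → Matrix (Fin m) (Fin m) ℝ)
    (x : EuclideanSpace ℝ (Fin n)) (z : EuclideanSpace ℝ (Fin m)) : ℝ :=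
  inner ℝ z (mulVecE (A x) z)

/-- `ℓ(x,z) = A(x)z − Φ(x,z)z`, the tangent dynamics projected on the unit sphere. -/
noncomputable def ell {n m : ℕ} (A : EuclideanSpace ℝ (Fin n) → Matrix (Fin m) (Fin m) ℝ)
    (x : EuclideanSpace ℝ (Fin n)) (z : EuclideanSpace ℝ (Fin m)) :
    EuclideanSpace ℝ (Fin m) :=
  mulVecE (A x) z - Phi A x z • z

/-! Write `y = ‖y‖ u` with `u` on the unit sphere. Then `(log ‖y‖)' = Φ(x, u)` and `u' = ℓ(x, u)`,
so `W(t) = log ‖y t‖ + V(x t, u t)` has derivative `Φ(x, u) + f(x)·D_xV + ℓ(x, u)·D_zV`, which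
is at most any `r` above the supremum. As `(x, u)` stays in the compact set
`closure (x '' Ici 0) × sphere 0 1`, the term `V(x, u)` is bounded, hence
`log ‖y t‖ ≤ r t + O(1)`. That `u` is defined at all, i.e. `y` never vanishes, follows from a
Grönwall estimate `‖y t‖² ≥ e^{-2Mt} ‖y 0‖²`, with `M` a bound for `‖A‖` on that compact set. -/

open scoped RealInnerProductSpace Topology

theorem monotoneOn_of_hasDerivWithinAt_nonneg' {D : Set ℝ} (hD : Convex ℝ D) {f f' : ℝ → ℝ}
    (hf : ∀ t ∈ D, HasDerivWithinAt f (f' t) D t) (hf' : ∀ t ∈ D, 0 ≤ f' t) :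
    MonotoneOn f D :=
  monotoneOn_of_hasDerivWithinAt_nonneg hD (fun t ht => (hf t ht).continuousWithinAt)
    (fun t ht => (hf t (interior_subset ht)).mono interior_subset)
    (fun t ht => hf' t (interior_subset ht))

theorem limsup_inv_mul_le_of_le_mul_add {g : ℝ → ℝ} {r B : ℝ}
    (h : ∀ᶠ t in atTop, g t ≤ r * t + B) :
    limsup (fun t => ((1 / t * g t : ℝ) : EReal)) atTop ≤ r := by
  have hlim : Tendsto (fun t : ℝ => ((r + B / t : ℝ) : EReal)) atTop (𝓝 (r : EReal)) := by
    refine (continuous_coe_real_ereal.tendsto r).comp ?_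
    simpa using tendsto_const_nhds.add ((tendsto_const_nhds (x := B)).div_atTop tendsto_id)
  refine (limsup_le_limsup ?_).trans_eq hlim.limsup_eq
  filter_upwards [h, eventually_gt_atTop 0] with t hgt ht
  calc ((1 / t * g t : ℝ) : EReal) ≤ ((1 / t * (r * t + B) : ℝ) : EReal) := by gcongr
    _ = ((r + B / t : ℝ) : EReal) := by congr 1; field_simp

theorem limsup_inv_mul_le_of_hasDerivWithinAt_add_le {g w g' : ℝ → ℝ} {r C : ℝ}
    (hd : ∀ t ∈ Ici (0 : ℝ), HasDerivWithinAt (fun τ => g τ + w τ) (g' t) (Ici 0) t)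
    (hle : ∀ t ∈ Ici (0 : ℝ), g' t ≤ r) (hw : ∀ t ∈ Ici (0 : ℝ), |w t| ≤ C) :
    limsup (fun t => ((1 / t * g t : ℝ) : EReal)) atTop ≤ r := by
  have hmono : MonotoneOn (fun τ => r * τ - (g τ + w τ)) (Ici 0) :=
    monotoneOn_of_hasDerivWithinAt_nonneg' (f' := fun t => r - g' t) (convex_Ici 0)
      (fun t ht => by
        simpa using ((hasDerivAt_id t).const_mul r).hasDerivWithinAt.fun_sub (hd t ht))
      (fun t ht => sub_nonneg.2 (hle t ht))
  refine limsup_inv_mul_le_of_le_mul_add (B := g 0 + 2 * C) ?_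
  filter_upwards [eventually_ge_atTop 0] with t ht
  have h := hmono self_mem_Ici ht ht
  have hw0 := abs_le.1 (hw 0 self_mem_Ici)
  have hwt := abs_le.1 (hw t ht)
  simp only [mul_zero] at h
  linarith [hw0.1, hwt.2]

section Normalize

variable {E : Type*} [NormedAddCommGroup E] [InnerProductSpace ℝ E] {y : ℝ → E} {y' : E}
  {s : Set ℝ} {t : ℝ}

theorem HasDerivWithinAt.norm (hy : HasDerivWithinAt y y' s t) (h0 : y t ≠ 0) :
    HasDerivWithinAt (‖y ·‖) (⟪y t, y'⟫ / ‖y t‖) s t := by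
  have hsq : ‖y t‖ ^ 2 ≠ 0 := by positivity
  convert hy.norm_sq.sqrt hsq using 1
  · simp [Real.sqrt_sq (norm_nonneg _)]
  · rw [Real.sqrt_sq (norm_nonneg _)]; ring

variable {T : E →L[ℝ] E}

theorem HasDerivWithinAt.log_norm (hy : HasDerivWithinAt y (T (y t)) s t) (h0 : y t ≠ 0) :
    HasDerivWithinAt (fun τ => Real.log ‖y τ‖) ⟪‖y t‖⁻¹ • y t, T (‖y t‖⁻¹ • y t)⟫ s t := by
  convert (hy.norm h0).log (norm_ne_zero_iff.2 h0) using 1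
  simp only [map_smul, inner_smul_left, inner_smul_right, RCLike.conj_to_real]
  field_simp

theorem HasDerivWithinAt.inv_norm_smul (hy : HasDerivWithinAt y (T (y t)) s t) (h0 : y t ≠ 0) :
    HasDerivWithinAt (fun τ => ‖y τ‖⁻¹ • y τ)
      (T (‖y t‖⁻¹ • y t) - ⟪‖y t‖⁻¹ • y t, T (‖y t‖⁻¹ • y t)⟫ • ‖y t‖⁻¹ • y t) s t := by
  convert ((hy.norm h0).fun_inv (norm_ne_zero_iff.2 h0)).fun_smul hy using 1
  have : ‖y t‖ ≠ 0 := norm_ne_zero_iff.2 h0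
  simp only [map_smul, inner_smul_left, inner_smul_right, RCLike.conj_to_real, smul_smul,
    sub_eq_add_neg, ← neg_smul]
  congr 2
  field_simp

end Normalize

theorem ne_zero_of_norm_deriv_le {E : Type*} [NormedAddCommGroup E] [InnerProductSpace ℝ E]
    {y y' : ℝ → E} {a M : ℝ} (hy : ∀ t ∈ Ici a, HasDerivWithinAt y (y' t) (Ici a) t)
    (hM : ∀ t ∈ Ici a, ‖y' t‖ ≤ M * ‖y t‖) (ha : y a ≠ 0) {t : ℝ} (ht : t ∈ Ici a) :
    y t ≠ 0 := by
  have hmono : MonotoneOn (fun τ => Real.exp (2 * M * τ) * ‖y τ‖ ^ 2) (Ici a) := by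
    refine monotoneOn_of_hasDerivWithinAt_nonneg' (convex_Ici a)
      (f' := fun τ => Real.exp (2 * M * τ) * (2 * M * ‖y τ‖ ^ 2 + 2 * ⟪y τ, y' τ⟫))
      (fun τ hτ => ?_) (fun τ hτ => ?_)
    · have hexp := (((hasDerivAt_id' τ).const_mul (2 * M)).exp).hasDerivWithinAt (s := Ici a)
      exact (hexp.fun_mul (hy τ hτ).norm_sq).congr_deriv (by ring)
    · have hinner : |⟪y τ, y' τ⟫| ≤ M * ‖y τ‖ ^ 2 :=
        calc |⟪y τ, y' τ⟫| ≤ ‖y τ‖ * ‖y' τ‖ := abs_real_inner_le_norm _ _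
          _ ≤ ‖y τ‖ * (M * ‖y τ‖) := by gcongr; exact hM τ hτ
          _ = M * ‖y τ‖ ^ 2 := by ring
      have : 0 ≤ 2 * M * ‖y τ‖ ^ 2 + 2 * ⟪y τ, y' τ⟫ := by linarith [(abs_le.1 hinner).1]
      positivity
  intro hzero
  have hle := hmono self_mem_Ici ht ht
  simp only [hzero, norm_zero] at hle
  have : 0 < Real.exp (2 * M * a) * ‖y a‖ ^ 2 := by positivity
  linarith

theorem exists_forall_norm_toEuclideanCLM_le {X : Type*} [TopologicalSpace X] {m : ℕ}
    {A : X → Matrix (Fin m) (Fin m) ℝ} {K : Set X} (hK : IsCompact K) (hA : ContinuousOn A K) :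
    ∃ M, ∀ p ∈ K, ‖Matrix.toEuclideanCLM (𝕜 := ℝ) (A p)‖ ≤ M :=
  hK.exists_bound_of_continuousOn <|
    (LinearMap.continuous_of_finiteDimensional
      (Matrix.toEuclideanCLM (𝕜 := ℝ) (n := Fin m)).toAlgEquiv.toLinearMap).comp_continuousOn hA

theorem hasDerivWithinAt_log_norm_add_comp_inv_norm_smul {n m : ℕ}
    {A : EuclideanSpace ℝ (Fin n) → Matrix (Fin m) (Fin m) ℝ}
    {V : EuclideanSpace ℝ (Fin n) × EuclideanSpace ℝ (Fin m) → ℝ}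
    {x : ℝ → EuclideanSpace ℝ (Fin n)} {y : ℝ → EuclideanSpace ℝ (Fin m)}
    {x' : EuclideanSpace ℝ (Fin n)} {s : Set ℝ} {t : ℝ}
    (hx : HasDerivWithinAt x x' s t) (hy : HasDerivWithinAt y (mulVecE (A (x t)) (y t)) s t)
    (h0 : y t ≠ 0) (hV : DifferentiableAt ℝ V (x t, ‖y t‖⁻¹ • y t)) :
    HasDerivWithinAt (fun τ => Real.log ‖y τ‖ + V (x τ, ‖y τ‖⁻¹ • y τ))
      (Phi A (x t) (‖y t‖⁻¹ • y t)
        + fderiv ℝ V (x t, ‖y t‖⁻¹ • y t) (x', ell A (x t) (‖y t‖⁻¹ • y t))) s t :=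
  (hy.log_norm h0).add (hV.hasFDerivAt.comp_hasDerivWithinAt t (hx.prodMk (hy.inv_norm_smul h0)))

theorem stmt_4_general {n m : ℕ} (𝓑 : Set (EuclideanSpace ℝ (Fin n)))
    (f : EuclideanSpace ℝ (Fin n) → EuclideanSpace ℝ (Fin n))
    (A : EuclideanSpace ℝ (Fin n) → Matrix (Fin m) (Fin m) ℝ)
    (hA : ContinuousOn A 𝓑)
    (V : EuclideanSpace ℝ (Fin n) × EuclideanSpace ℝ (Fin m) → ℝ) (hV : ContDiff ℝ 1 V)
    (x : ℝ → EuclideanSpace ℝ (Fin n))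
    (hxmem : ∀ t ∈ Ici (0 : ℝ), x t ∈ 𝓑)
    (hxode : ∀ t ∈ Ici (0 : ℝ), HasDerivWithinAt x (f (x t)) (Ici 0) t)
    (hxbdd : IsBounded (x '' Ici 0))
    (hxcl : closure (x '' Ici 0) ⊆ 𝓑)
    (y : ℝ → EuclideanSpace ℝ (Fin m)) (hy0 : y 0 ≠ 0)
    (hyode : ∀ t ∈ Ici (0 : ℝ), HasDerivWithinAt y (mulVecE (A (x t)) (y t)) (Ici 0) t) :
    limsup (fun t => ((1 / t * Real.log ‖y t‖ : ℝ) : EReal)) atTop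
      ≤ ⨆ p : {q : EuclideanSpace ℝ (Fin n) × EuclideanSpace ℝ (Fin m) //
            q.1 ∈ 𝓑 ∧ ‖q.2‖ = 1},
          ((Phi A p.val.1 p.val.2
              + fderiv ℝ V p.val (f p.val.1, ell A p.val.1 p.val.2) : ℝ) : EReal) := by
  have hK : IsCompact (closure (x '' Ici 0)) := hxbdd.isCompact_closure
  have hxK : ∀ t ∈ Ici (0 : ℝ), x t ∈ closure (x '' Ici 0) :=
    fun t ht => subset_closure (mem_image_of_mem x ht)
  obtain ⟨M, hM⟩ := exists_forall_norm_toEuclideanCLM_le hK (hA.mono hxcl)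
  have hy : ∀ t ∈ Ici (0 : ℝ), y t ≠ 0 := fun t ht =>
    ne_zero_of_norm_deriv_le hyode (fun τ hτ => (ContinuousLinearMap.le_opNorm _ _).trans
      (by gcongr; exact hM _ (hxK τ hτ))) hy0 ht
  obtain ⟨C, hC⟩ := (hK.prod (isCompact_sphere 0 1)).exists_bound_of_continuousOn
    hV.continuous.continuousOn
  refine EReal.le_of_forall_lt_iff_le.1 fun r hr => ?_
  refine limsup_inv_mul_le_of_hasDerivWithinAt_add_le (C := C)
    (fun t ht => hasDerivWithinAt_log_norm_add_comp_inv_norm_smul (hxode t ht) (hyode t ht)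
      (hy t ht) ((hV.differentiable one_ne_zero) _)) (fun t ht => ?_) (fun t ht => ?_)
  · exact EReal.coe_le_coe_iff.1 <|
      iSup_le_iff.1 hr.le ⟨(x t, ‖y t‖⁻¹ • y t), hxmem t ht, norm_smul_inv_norm (hy t ht)⟩
  · exact hC _ ⟨hxK t ht, mem_sphere_zero_iff_norm.2 (norm_smul_inv_norm (hy t ht))⟩

/-- per-trajectory form of Proposition 2.2(1), the sphere projection bound:
along a bounded trajectory of `x' = f(x)` in `𝓑`, the top exponent of the linear tangent
dynamics `y' = A(x(t))y` is bounded above by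
`sup { Φ(x,z) + f(x)·D_xV(x,z) + ℓ(x,z)·D_zV(x,z) : x ∈ 𝓑, |z| = 1 }`. -/
theorem stmt_4 {n m : ℕ} (𝓑 : Set (EuclideanSpace ℝ (Fin n)))
    (f : EuclideanSpace ℝ (Fin n) → EuclideanSpace ℝ (Fin n))
    (A : EuclideanSpace ℝ (Fin n) → Matrix (Fin m) (Fin m) ℝ)
    (hf : ContinuousOn f 𝓑) (hA : ContinuousOn A 𝓑)
    (V : EuclideanSpace ℝ (Fin n) × EuclideanSpace ℝ (Fin m) → ℝ) (hV : ContDiff ℝ 1 V)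
    (x : ℝ → EuclideanSpace ℝ (Fin n))
    (hxmem : ∀ t ∈ Ici (0 : ℝ), x t ∈ 𝓑)
    (hxode : ∀ t ∈ Ici (0 : ℝ), HasDerivWithinAt x (f (x t)) (Ici 0) t)
    (hxbdd : IsBounded (x '' Ici 0))
    (hxcl : closure (x '' Ici 0) ⊆ 𝓑)
    (y : ℝ → EuclideanSpace ℝ (Fin m)) (hy0 : y 0 ≠ 0)
    (hyode : ∀ t ∈ Ici (0 : ℝ), HasDerivWithinAt y (mulVecE (A (x t)) (y t)) (Ici 0) t) :
    limsup (fun t => ((1 / t * Real.log ‖y t‖ : ℝ) : EReal)) atTop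
      ≤ ⨆ p : {q : EuclideanSpace ℝ (Fin n) × EuclideanSpace ℝ (Fin m) //
            q.1 ∈ 𝓑 ∧ ‖q.2‖ = 1},
          ((Phi A p.val.1 p.val.2
              + fderiv ℝ V p.val (f p.val.1, ell A p.val.1 p.val.2) : ℝ) : EReal) :=
  stmt_4_general 𝓑 f A hA V hV x hxmem hxode hxbdd hxcl y hy0 hyode
end

section
/- Let A : [0,∞) → ℝ^{m×m} be continuous, and for each y₀ ∈ ℝ^m let y(·;y₀) : [0,∞) → ℝ^m denote the unique differentiable solution of y′(t) = A(t)y(t), y(0) = y₀. Define μ = sup over unit vectors y₀ of limsup_{t→∞} (1/t) log|y(t;y₀)|. If B ∈ ℝ satisfies B > μ, then there exist constants K > 0 and λ > 0 such that e^{−Bt}|y(t;y₀)| ≤ K e^{−λt} |y₀| for all t ≥ 0 and all y₀ ∈ ℝ^m. -/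
/-!
Solutions of a linear equation depend linearly on their initial value (uniqueness for linear
ODEs, i.e. Grönwall), so `y(t; y₀) = ∑ᵢ y₀ᵢ y(t; eᵢ)`. Pick `μ < β < B`. Each basis solution
satisfies `‖y(t; eᵢ)‖ ≤ e^{βt}` for large `t` and is bounded on compact intervals, hence
`‖y(t; eᵢ)‖ ≤ Cᵢ e^{βt}` for all `t ≥ 0`. Summing gives the claim with `λ = B - β`.
-/

open Filter Set Bornology

section LinearODE

variable {E : Type*} [NormedAddCommGroup E] [NormedSpace ℝ E] {Φ : ℝ → E →L[ℝ] E}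

theorem linear_ODE_solution_unique_of_mem_Icc_right {a b : ℝ} (hΦ : ContinuousOn Φ (Icc a b))
    {f g : ℝ → E} (hf : ContinuousOn f (Icc a b))
    (hf' : ∀ t ∈ Ico a b, HasDerivWithinAt f (Φ t (f t)) (Ici t) t)
    (hg : ContinuousOn g (Icc a b))
    (hg' : ∀ t ∈ Ico a b, HasDerivWithinAt g (Φ t (g t)) (Ici t) t) (ha : f a = g a) :
    EqOn f g (Icc a b) := by
  obtain ⟨K, hK⟩ := isCompact_Icc.exists_bound_of_continuousOn hΦ
  have hlip : ∀ t ∈ Ico a b, LipschitzOnWith ⟨max K 0, le_max_right _ _⟩ (Φ t) univ :=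
    fun t ht => ((Φ t).lipschitz.weaken <| (hK t (Ico_subset_Icc_self ht)).trans
      (le_max_left _ _)).lipschitzOnWith
  exact ODE_solution_unique_of_mem_Icc_right hlip hf hf' (fun _ _ => mem_univ _) hg hg'
    (fun _ _ => mem_univ _) ha

theorem linear_ODE_solution_sum_smul (hΦ : ContinuousOn Φ (Ici 0))
    {y : E → ℝ → E} (hy0 : ∀ v, y v 0 = v)
    (hy : ∀ v, ∀ t ∈ Ici (0 : ℝ), HasDerivWithinAt (y v) (Φ t (y v t)) (Ici 0) t)
    {ι : Type*} [Fintype ι] (c : ι → ℝ) (v : ι → E) {t : ℝ} (ht : 0 ≤ t) :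
    y (∑ i, c i • v i) t = ∑ i, c i • y (v i) t := by
  have hcont : ∀ w, ContinuousOn (y w) (Icc 0 t) := fun w s hs =>
    (hy w s hs.1).continuousWithinAt.mono Icc_subset_Ici_self
  have hderiv : ∀ w, ∀ s ∈ Ico 0 t, HasDerivWithinAt (y w) (Φ s (y w s)) (Ici s) s :=
    fun w s hs => (hy w s hs.1).mono (Ici_subset_Ici.2 hs.1)
  refine linear_ODE_solution_unique_of_mem_Icc_right (g := fun s => ∑ i, c i • y (v i) s)
    (hΦ.mono Icc_subset_Ici_self) (hcont _) (hderiv _)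
    (continuousOn_finsetSum _ fun i _ => (hcont (v i)).const_smul (c i)) (fun s hs => ?_)
    (by simp only [hy0]) ⟨ht, le_rfl⟩
  simpa only [map_sum, map_smul, Pi.smul_apply] using
    HasDerivWithinAt.fun_sum fun i _ => (hderiv (v i) s hs).const_smul (c i)

end LinearODE

theorem eventually_norm_le_exp_of_limsup_lt {E : Type*} [NormedAddCommGroup E] {f : ℝ → E}
    {β : ℝ} (hf : limsup (fun t => ((1 / t * Real.log ‖f t‖ : ℝ) : EReal)) atTop < β) :
    ∀ᶠ t in atTop, ‖f t‖ ≤ Real.exp (β * t) := by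
  filter_upwards [eventually_lt_of_limsup_lt hf, eventually_gt_atTop 0] with t hlt ht
  rcases (norm_nonneg (f t)).eq_or_lt with h0 | hpos
  · rw [← h0]; positivity
  have hlog : Real.log ‖f t‖ < β * t := by
    have : Real.log ‖f t‖ / t < β := by rw [div_eq_inv_mul, ← one_div]; exact_mod_cast hlt
    rwa [div_lt_iff₀ ht] at this
  exact ((Real.log_lt_iff_lt_exp hpos).1 hlog).le

theorem exists_le_of_continuousOn_Ici_of_eventually_le {g : ℝ → ℝ} {a c : ℝ}
    (hg : ContinuousOn g (Ici a)) (hc : ∀ᶠ t in atTop, g t ≤ c) :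
    ∃ C, ∀ t ≥ a, g t ≤ C := by
  obtain ⟨T, hT⟩ := eventually_atTop.1 hc
  obtain ⟨M, hM⟩ :=
    isCompact_Icc.exists_bound_of_continuousOn (hg.mono (Icc_subset_Ici_self : Icc a T ⊆ Ici a))
  refine ⟨max M c, fun t ht => ?_⟩
  rcases le_total t T with htT | hTt
  · exact (le_abs_self _).trans ((hM t ⟨ht, htT⟩).trans (le_max_left _ _))
  · exact (hT t hTt).trans (le_max_right _ _)

theorem exists_norm_le_mul_exp_of_limsup_lt {E : Type*} [NormedAddCommGroup E] {f : ℝ → E}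
    (hf : ContinuousOn f (Ici 0)) {β : ℝ}
    (hβ : limsup (fun t => ((1 / t * Real.log ‖f t‖ : ℝ) : EReal)) atTop < β) :
    ∃ C, ∀ t ≥ 0, ‖f t‖ ≤ C * Real.exp (β * t) := by
  have hdecay : ∀ᶠ t in atTop, ‖f t‖ * Real.exp (-(β * t)) ≤ 1 := by
    filter_upwards [eventually_norm_le_exp_of_limsup_lt hβ] with t ht
    rwa [Real.exp_neg, mul_inv_le_iff₀ (Real.exp_pos _), one_mul]
  have hcont : ContinuousOn (fun t => ‖f t‖ * Real.exp (-(β * t))) (Ici 0) :=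
    hf.norm.mul (by fun_prop)
  obtain ⟨C, hC⟩ := exists_le_of_continuousOn_Ici_of_eventually_le hcont hdecay
  refine ⟨C, fun t ht => ?_⟩
  have := hC t ht
  rwa [Real.exp_neg, mul_inv_le_iff₀ (Real.exp_pos _)] at this

theorem EuclideanSpace.norm_sum_smul_le {ι F : Type*} [Fintype ι] [SeminormedAddCommGroup F]
    [NormedSpace ℝ F] (x : EuclideanSpace ℝ ι) (w : ι → F) :
    ‖∑ i, x i • w i‖ ≤ ‖x‖ * ∑ i, ‖w i‖ :=
  calc ‖∑ i, x i • w i‖ ≤ ∑ i, ‖x i‖ * ‖w i‖ := norm_sum_le_of_le _ fun _ _ => norm_smul_le _ _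
    _ ≤ ∑ i, ‖x‖ * ‖w i‖ := Finset.sum_le_sum fun i _ =>
        mul_le_mul_of_nonneg_right (PiLp.norm_apply_le x i) (norm_nonneg _)
    _ = ‖x‖ * ∑ i, ‖w i‖ := (Finset.mul_sum _ _ _).symm

theorem Matrix.continuous_toEuclideanCLM {n : Type*} [Fintype n] [DecidableEq n] :
    Continuous (Matrix.toEuclideanCLM (𝕜 := ℝ) (n := n)) :=
  (Matrix.toEuclideanCLM (𝕜 := ℝ) (n := n)).toAlgEquiv.toLinearEquiv.toLinearMap
    |>.continuous_of_finiteDimensional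

/-- Lemma 2.5(2): uniform exponential decay of the spectrum-shifted tangent
dynamics: for a continuous time-dependent linear system `y' = A(t)y` with solution family
`y(·;y₀)` and top exponent `μ = sup_{|y₀|=1} limsup (1/t) log|y(t;y₀)|`, any shift `B > μ`
gives constants `K > 0` and `λ > 0` with `e^{−Bt}|y(t;y₀)| ≤ K e^{−λt}|y₀|` for all `t ≥ 0`
and all `y₀`. -/
theorem stmt_8 {m : ℕ} (A : ℝ → Matrix (Fin m) (Fin m) ℝ) (hA : ContinuousOn A (Ici 0))
    (y : EuclideanSpace ℝ (Fin m) → ℝ → EuclideanSpace ℝ (Fin m))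
    (hy0 : ∀ y₀, y y₀ 0 = y₀)
    (hyode : ∀ y₀, ∀ t ∈ Ici (0 : ℝ),
      HasDerivWithinAt (y y₀) (mulVecE (A t) (y y₀ t)) (Ici 0) t)
    (B : ℝ)
    (hB : (⨆ y₀ : {v : EuclideanSpace ℝ (Fin m) // ‖v‖ = 1},
      limsup (fun t => ((1 / t * Real.log ‖y y₀.val t‖ : ℝ) : EReal)) atTop) < (B : EReal)) :
    ∃ K > (0 : ℝ), ∃ lam > (0 : ℝ), ∀ y₀ : EuclideanSpace ℝ (Fin m), ∀ t ∈ Ici (0 : ℝ),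
      Real.exp (-B * t) * ‖y y₀ t‖ ≤ K * Real.exp (-lam * t) * ‖y₀‖ := by
  obtain ⟨β, hμβ, hβB⟩ := EReal.exists_between_coe_real hB
  let e : Fin m → EuclideanSpace ℝ (Fin m) := fun i => EuclideanSpace.single i 1
  have hgrowth (i : Fin m) : ∃ C, ∀ t ≥ 0, ‖y (e i) t‖ ≤ C * Real.exp (β * t) :=
    exists_norm_le_mul_exp_of_limsup_lt (fun t ht => (hyode (e i) t ht).continuousWithinAt)
      ((le_iSup (fun v : {v : EuclideanSpace ℝ (Fin m) // ‖v‖ = 1} =>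
        limsup (fun t => ((1 / t * Real.log ‖y v.val t‖ : ℝ) : EReal)) atTop)
        ⟨e i, by simp [e]⟩).trans_lt hμβ)
  choose C hC using hgrowth
  refine ⟨∑ i, |C i| + 1, by positivity, B - β, sub_pos.2 (EReal.coe_lt_coe_iff.1 hβB),
    fun y₀ t (ht : 0 ≤ t) => ?_⟩
  have hlin : y y₀ t = ∑ i, y₀ i • y (e i) t := by
    conv_lhs => rw [← (EuclideanSpace.basisFun (Fin m) ℝ).sum_repr y₀]
    simpa [e] using linear_ODE_solution_sum_smul
      (Matrix.continuous_toEuclideanCLM.comp_continuousOn hA) hy0 hyode y₀ e ht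
  have hbound : ∑ i, ‖y (e i) t‖ ≤ (∑ i, |C i| + 1) * Real.exp (β * t) :=
    calc ∑ i, ‖y (e i) t‖ ≤ ∑ i, |C i| * Real.exp (β * t) :=
          Finset.sum_le_sum fun i _ => (hC i t ht).trans (by gcongr; exact le_abs_self _)
      _ ≤ (∑ i, |C i| + 1) * Real.exp (β * t) := by rw [← Finset.sum_mul]; gcongr; linarith
  calc Real.exp (-B * t) * ‖y y₀ t‖
      ≤ Real.exp (-B * t) * (‖y₀‖ * ((∑ i, |C i| + 1) * Real.exp (β * t))) := by
        rw [hlin]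
        gcongr
        exact (EuclideanSpace.norm_sum_smul_le y₀ _).trans
          (mul_le_mul_of_nonneg_left hbound (norm_nonneg _))
    _ = (∑ i, |C i| + 1) * Real.exp (-(B - β) * t) * ‖y₀‖ := by
        rw [show -(B - β) * t = -B * t + β * t by ring, Real.exp_add]; ring
end

section
/- Let F₁,…,Fₙ, Φ, V, g₁,…,g_I, h₁,…,h_J be real polynomials in n variables, and B ∈ ℝ. Suppose there exist polynomials σ₀, σ₁, …, σ_I, each a sum of squares of real polynomials, and polynomials ρ₁, …, ρ_J, such that B − Φ − Σᵢ Fᵢ·(∂V/∂Xᵢ) = σ₀ + Σᵢ σᵢ·gᵢ + Σⱼ ρⱼ·hⱼ as polynomials. Let Ω = { x ∈ ℝⁿ : gᵢ(x) ≥ 0 for all i and hⱼ(x) = 0 for all j }. Then for every bounded differentiable function X : [0,∞) → Ω with X′(t) = F(X(t)) for all t ≥ 0, one has limsup_{T→∞} (1/T) ∫₀ᵀ Φ(X(t)) dt ≤ B. -/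
open Filter Set Bornology MvPolynomial

/-!
Along the trajectory the certificate gives `Φ(X t) ≤ B - (d/dt) V(X t)`, since the sums of
squares are nonnegative, the `gᵢ` are nonnegative and the `hⱼ` vanish on `Ω`. Integrating over
`[0, T]` bounds `∫₀ᵀ Φ(X t) dt` by `B T + V(X 0) - V(X T)`, and `V ∘ X` is bounded because `X`
is, so the time average is at most `B + O(1/T)`. Boundedness of `Φ ∘ X` keeps the averages
bounded below, which is what makes their `limsup` in `ℝ` meaningful.
-/

theorem IsSumSq.map {R S F : Type*} [NonUnitalNonAssocSemiring R] [NonUnitalNonAssocSemiring S]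
    [FunLike F R S] [NonUnitalRingHomClass F R S] (f : F) {s : R} (hs : IsSumSq s) :
    IsSumSq (f s) := by
  induction hs with
  | zero => simp
  | sq_add a _ ih => simpa using ih.sq_add (f a)

namespace MvPolynomial

variable {σ R : Type*}

theorem eval_nonneg_of_eq_sumSq_add [CommRing R] [LinearOrder R] [IsStrictOrderedRing R]
    {I J : Type*} [Fintype I] [Fintype J] {P s₀ : MvPolynomial σ R}
    {s g : I → MvPolynomial σ R} {ρ h : J → MvPolynomial σ R}
    (hP : P = s₀ + ∑ i, s i * g i + ∑ j, ρ j * h j) (hs₀ : IsSumSq s₀)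
    (hs : ∀ i, IsSumSq (s i)) {x : σ → R} (hg : ∀ i, 0 ≤ eval x (g i))
    (hh : ∀ j, eval x (h j) = 0) : 0 ≤ eval x P := by
  simp only [hP, map_add, map_sum, map_mul, hh, mul_zero, Finset.sum_const_zero, add_zero]
  exact add_nonneg (hs₀.map (eval x)).nonneg
    (Finset.sum_nonneg fun i _ => mul_nonneg ((hs i).map (eval x)).nonneg (hg i))

theorem hasDerivWithinAt_eval [Fintype σ] [DecidableEq σ] {Y : ℝ → σ → ℝ} {Y' : σ → ℝ}
    {s : Set ℝ} {t : ℝ} (hY : HasDerivWithinAt Y Y' s t) (P : MvPolynomial σ ℝ) :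
    HasDerivWithinAt (fun u => eval (Y u) P) (∑ i, Y' i * eval (Y t) (pderiv i P)) s t := by
  induction P using MvPolynomial.induction_on with
  | C a => simpa using hasDerivWithinAt_const t s a
  | add p q hp hq => simpa [mul_add, Finset.sum_add_distrib] using hp.fun_add hq
  | mul_X p j hp =>
    have hproduct : ∑ i, Y' i * eval (Y t) (pderiv i (p * X j)) =
        (∑ i, Y' i * eval (Y t) (pderiv i p)) * Y t j + eval (Y t) p * Y' j := by
      simp only [Derivation.leibniz, pderiv_X, Pi.single_apply, smul_eq_mul, map_add, map_mul,
        eval_X, mul_add, Finset.sum_add_distrib, Finset.sum_mul, apply_ite (eval (Y t)),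
        map_zero, mul_ite, mul_one, mul_zero, Finset.sum_ite_eq, Finset.mem_univ, if_true]
      rw [add_comm, mul_comm (eval (Y t) p)]
      congr 1
      exact Finset.sum_congr rfl fun i _ => by ring
    simpa only [hproduct, map_mul, eval_X] using hp.fun_mul (hasDerivWithinAt_pi.mp hY j)

end MvPolynomial

section TimeAverage

variable {φ W W' : ℝ → ℝ} {B : ℝ}

theorem integral_le_mul_sub_of_le_sub_deriv (hφ : ContinuousOn φ (Ici 0))
    (hW : ∀ t ∈ Ici (0 : ℝ), HasDerivWithinAt W (W' t) (Ici 0) t)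
    (hle : ∀ t ∈ Ici (0 : ℝ), φ t ≤ B - W' t) {T : ℝ} (hT : 0 ≤ T) :
    ∫ t in (0 : ℝ)..T, φ t ≤ B * T - (W T - W 0) := by
  have hIcc : Icc 0 T ⊆ Ici (0 : ℝ) := Icc_subset_Ici_self
  have hWcont : ContinuousOn W (Ici 0) := fun t ht => (hW t ht).continuousWithinAt
  have := intervalIntegral.integral_le_sub_of_hasDeriv_right_of_le (g := fun t => B * t - W t)
    hT ((continuousOn_const.mul continuousOn_id).sub (hWcont.mono hIcc))
    (fun t ht => (((hasDerivWithinAt_id t _).const_mul B).sub (hW t ht.1.le)).mono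
      fun u hu => (ht.1.trans hu).le)
    (hφ.mono hIcc).integrableOn_Icc (fun t ht => by simpa using hle t ht.1.le)
  linarith

theorem le_average_of_le (hφ : ContinuousOn φ (Ici 0)) {m : ℝ} (hm : ∀ t ∈ Ici (0 : ℝ), m ≤ φ t)
    {T : ℝ} (hT : 0 < T) : m ≤ (1 / T) * ∫ t in (0 : ℝ)..T, φ t := by
  have : ∫ _ in (0 : ℝ)..T, m ≤ ∫ t in (0 : ℝ)..T, φ t :=
    intervalIntegral.integral_mono_on hT.le intervalIntegrable_const
      ((hφ.mono Icc_subset_Ici_self).intervalIntegrable_of_Icc hT.le)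
      fun t ht => hm t ht.1
  rw [intervalIntegral.integral_const, smul_eq_mul, sub_zero] at this
  rw [one_div_mul_eq_div, le_div_iff₀ hT]
  linarith

theorem limsup_average_le_of_le_sub_deriv (hφ : ContinuousOn φ (Ici 0))
    (hW : ∀ t ∈ Ici (0 : ℝ), HasDerivWithinAt W (W' t) (Ici 0) t)
    (hle : ∀ t ∈ Ici (0 : ℝ), φ t ≤ B - W' t) {M m : ℝ} (hWM : ∀ t ∈ Ici (0 : ℝ), |W t| ≤ M)
    (hφm : ∀ t ∈ Ici (0 : ℝ), m ≤ φ t) :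
    limsup (fun T => (1 / T) * ∫ t in (0 : ℝ)..T, φ t) atTop ≤ B := by
  have hupper : ∀ᶠ T in atTop, (1 / T) * ∫ t in (0 : ℝ)..T, φ t ≤ B + 2 * M / T := by
    filter_upwards [eventually_gt_atTop 0] with T hT
    have hint := integral_le_mul_sub_of_le_sub_deriv hφ hW hle hT.le
    have hW0 := abs_le.mp (hWM 0 self_mem_Ici)
    have hWT := abs_le.mp (hWM T hT.le)
    rw [one_div_mul_eq_div, div_le_iff₀ hT, add_mul, div_mul_cancel₀ _ hT.ne']
    linarith
  have hlower : ∀ᶠ T in atTop, m ≤ (1 / T) * ∫ t in (0 : ℝ)..T, φ t :=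
    (eventually_gt_atTop 0).mono fun T hT => le_average_of_le hφ hφm hT
  have hlim : Tendsto (fun T : ℝ => B + 2 * M / T) atTop (nhds B) := by
    simpa using
      (tendsto_const_nhds (x := B)).add ((tendsto_const_nhds (x := 2 * M)).div_atTop tendsto_id)
  calc _ ≤ limsup (fun T : ℝ => B + 2 * M / T) atTop :=
        limsup_le_limsup hupper (isCoboundedUnder_le_of_eventually_le atTop hlower)
          hlim.isBoundedUnder_le
    _ = B := hlim.limsup_eq

end TimeAverage

theorem exists_abs_le_of_isBounded_image {E : Type*} [PseudoMetricSpace E] [ProperSpace E]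
    {f : E → ℝ} (hf : Continuous f) {X : ℝ → E} {s : Set ℝ} (hX : IsBounded (X '' s)) :
    ∃ M, ∀ t ∈ s, |f (X t)| ≤ M := by
  obtain ⟨M, hM⟩ := hX.isCompact_closure.exists_bound_of_continuousOn hf.continuousOn
  exact ⟨M, fun t ht => hM _ (subset_closure (mem_image_of_mem X ht))⟩

/-- Proposition 2.8(1): sum-of-squares relaxation of the auxiliary-function
bound on time averages: if `B − Φ − Σᵢ Fᵢ·∂V/∂Xᵢ` lies in the quadratic module generated by
the polynomials `gᵢ`, `hⱼ` describing the semialgebraic set `Ω` (i.e. it equals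
`σ₀ + Σ σᵢgᵢ + Σ ρⱼhⱼ` with each `σ` a sum of squares), then along every bounded solution of
`X' = F(X)` in `Ω` the infinite-time average of `Φ` is at most `B`. -/
theorem stmt_12 {n I J : ℕ}
    (F : Fin n → MvPolynomial (Fin n) ℝ)
    (Φ V : MvPolynomial (Fin n) ℝ)
    (g : Fin I → MvPolynomial (Fin n) ℝ) (h : Fin J → MvPolynomial (Fin n) ℝ)
    (B : ℝ)
    (hrep : ∃ (σ₀ : MvPolynomial (Fin n) ℝ) (σ : Fin I → MvPolynomial (Fin n) ℝ)
        (ρ : Fin J → MvPolynomial (Fin n) ℝ),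
      IsSumSq σ₀ ∧ (∀ i, IsSumSq (σ i)) ∧
      C B - Φ - ∑ i, F i * pderiv i V
        = σ₀ + ∑ i, σ i * g i + ∑ j, ρ j * h j)
    (Ω : Set (Fin n → ℝ))
    (hΩ : Ω = {x : Fin n → ℝ | (∀ i, 0 ≤ eval x (g i)) ∧ ∀ j, eval x (h j) = 0})
    (X : ℝ → (Fin n → ℝ))
    (hXmem : ∀ t ∈ Ici (0 : ℝ), X t ∈ Ω)
    (hXode : ∀ t ∈ Ici (0 : ℝ),
      HasDerivWithinAt X (fun i => eval (X t) (F i)) (Ici 0) t)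
    (hXbdd : IsBounded (X '' Ici 0)) :
    limsup (fun T => (1 / T) * ∫ t in (0 : ℝ)..T, eval (X t) Φ) atTop ≤ B := by
  obtain ⟨σ₀, σ, ρ, hσ₀, hσ, hrep⟩ := hrep
  subst hΩ
  have hXcont : ContinuousOn X (Ici 0) := fun t ht => (hXode t ht).continuousWithinAt
  have hV : ∀ t ∈ Ici (0 : ℝ), HasDerivWithinAt (fun t => eval (X t) V)
      (eval (X t) (∑ i, F i * pderiv i V)) (Ici 0) t := fun t ht => by
    simpa only [map_sum, map_mul] using hasDerivWithinAt_eval (hXode t ht) V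
  have hle : ∀ t ∈ Ici (0 : ℝ), eval (X t) Φ ≤ B - eval (X t) (∑ i, F i * pderiv i V) :=
    fun t ht => by
      have hcert := eval_nonneg_of_eq_sumSq_add hrep hσ₀ hσ (hXmem t ht).1 (hXmem t ht).2
      simp only [map_sub, eval_C] at hcert
      linarith
  obtain ⟨MV, hMV⟩ := exists_abs_le_of_isBounded_image (continuous_eval V) hXbdd
  obtain ⟨MΦ, hMΦ⟩ := exists_abs_le_of_isBounded_image (continuous_eval Φ) hXbdd
  exact limsup_average_le_of_le_sub_deriv ((continuous_eval Φ).comp_continuousOn hXcont) hV hle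
    hMV fun t ht => neg_le_of_abs_le (hMΦ t ht)
end
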